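/- Let p be an odd prime and let f : ℤ → ℤ be a p-periodic function such that the vector (f(0), f(1), …, f(p−1)) is circular. Then the (p−1)-st finite difference ∂^{p−1} f takes all its values in pℤ, where ∂f(x) := f(x+1) − f(x). -/

import Mathlib

/-- A vector `v ∈ ℤ^p` (indexed by `Fin p`) is *circular* if there is an index `i`
with `v i = 0` and `v (i + j) = - v (i - j)` for all `j` with `1 ≤ j ≤ (p-1)/2`,
indices taken modulo `p`. -/
def Circular {p : ℕ} (v : Fin p → ℤ) : Prop :=
  ∃ i : Fin p, v i = 0 ∧
    ∀ j : Fin p, 1 ≤ (j : ℕ) → (j : ℕ) ≤ (p - 1) / 2 → v (i + j) = -v (i - j)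

/-- The forward difference operator `∂f(x) = f(x+1) - f(x)`. -/
def diffOp (f : ℤ → ℤ) : ℤ → ℤ := fun x => f (x + 1) - f x

/-!
Modulo `p` one has `C(p-1, k) ≡ (-1)^k`, so `∂^{p-1} f x ≡ ∑_{k<p} f (x + k)`, a sum over a full
period. By periodicity this equals `∑_{k<p} f k`, which vanishes because circularity around the
centre `i` pairs `f (i + j)` with `-f (i - j)`.
-/

open Finset
open scoped fwdDiff

theorem Nat.Prime.cast_choose_pred_eq_neg_one_pow {p : ℕ} (hp : p.Prime) {k : ℕ} (hk : k < p) :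
    ((p - 1).choose k : ZMod p) = (-1) ^ k := by
  induction k with
  | zero => simp
  | succ k ih =>
    -- Pascal's rule `C(p-1, k) + C(p-1, k+1) = C(p, k+1)`, and `p ∣ C(p, k+1)`.
    have hpascal : (p - 1).choose k + (p - 1).choose (k + 1) = p.choose (k + 1) := by
      conv_rhs => rw [← Nat.sub_one_add_one hp.ne_zero, Nat.choose_succ_succ]
    have hdvd : (p.choose (k + 1) : ZMod p) = 0 :=
      (ZMod.natCast_eq_zero_iff _ _).2 (hp.dvd_choose_self k.succ_ne_zero hk)
    rw [← hpascal, Nat.cast_add, ih (by omega)] at hdvd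
    rw [pow_succ, mul_neg_one, eq_neg_iff_add_eq_zero, add_comm, hdvd]

theorem fwdDiff_iter_pred_modEq_sum {M : Type*} [AddCommMonoid M] {p : ℕ} (hp : p.Prime)
    (h : M) (f : M → ℤ) (y : M) :
    (Δ_[h])^[p - 1] f y ≡ ∑ k ∈ range p, f (y + k • h) [ZMOD p] := by
  rw [← ZMod.intCast_eq_intCast_iff, fwdDiff_iter_eq_sum_shift, Nat.sub_one_add_one hp.ne_zero]
  push_cast
  refine sum_congr rfl fun k hk => ?_
  rw [mem_range] at hk
  have : Fact p.Prime := ⟨hp⟩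
  rw [smul_eq_mul, Int.cast_mul, Int.cast_mul, Int.cast_pow, Int.cast_neg, Int.cast_one,
    Int.cast_natCast, hp.cast_choose_pred_eq_neg_one_pow hk, ← pow_add,
    Nat.sub_add_cancel (by omega), ZMod.pow_card_sub_one_eq_one (neg_ne_zero.2 one_ne_zero), one_mul]

theorem Function.Periodic.sum_range_add_eq {M : Type*} [AddCommGroup M] {f : ℤ → M} {n : ℕ}
    (hf : Function.Periodic f n) (x : ℤ) :
    ∑ k ∈ range n, f (x + k) = ∑ k ∈ range n, f k := by
  have hshift : Function.Periodic (fun y => ∑ k ∈ range n, f (y + k)) 1 := by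
    intro y
    have := sum_range_succ' (fun k : ℕ => f (y + k)) n
    rw [sum_range_succ, Nat.cast_zero, add_zero, hf y] at this
    push_cast at this
    simpa [add_assoc, add_comm (1 : ℤ)] using (add_right_cancel this).symm
  simpa using hshift.int_mul_eq x

theorem Circular.exists_forall_add_eq_neg_sub {p : ℕ} (hodd : Odd p) {v : Fin p → ℤ}
    (hv : Circular v) : ∃ i : Fin p, ∀ j : Fin p, v (i + j) = -v (i - j) := by
  have : NeZero p := ⟨hodd.pos.ne'⟩
  obtain ⟨i, hi, hsym⟩ := hv
  refine ⟨i, fun j => ?_⟩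
  obtain rfl | hj := eq_or_ne j 0
  · simp [hi]
  have hj' : (j : ℕ) ≠ 0 := Fin.val_ne_of_ne hj
  by_cases hle : (j : ℕ) ≤ (p - 1) / 2
  · exact hsym j (by omega) hle
  · have hneg : ((-j : Fin p) : ℕ) = p - j := by rw [Fin.val_neg, if_neg hj]
    have := hsym (-j) (by omega) (by obtain ⟨m, rfl⟩ := hodd; omega)
    rw [sub_neg_eq_add, ← sub_eq_add_neg] at this
    rw [this, neg_neg]

theorem Circular.sum_eq_zero {p : ℕ} (hodd : Odd p) {v : Fin p → ℤ} (hv : Circular v) :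
    ∑ k, v k = 0 := by
  have : NeZero p := ⟨hodd.pos.ne'⟩
  obtain ⟨i, hanti⟩ := hv.exists_forall_add_eq_neg_sub hodd
  have hadd : ∑ k, v (i + k) = ∑ k, v k := Fintype.sum_equiv (Equiv.addLeft i) _ _ fun _ => rfl
  have hsub : ∑ k, v (i - k) = ∑ k, v k := Fintype.sum_equiv (Equiv.subLeft i) _ _ fun _ => rfl
  have hneg : ∑ k, v (i + k) = -∑ k, v (i - k) := by
    rw [← sum_neg_distrib]
    exact sum_congr rfl fun k _ => hanti k
  rw [hadd, hsub] at hneg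
  omega

/-- If `p` is an odd prime and `f : ℤ → ℤ` is `p`-periodic with
`(f 0, …, f (p-1))` circular, then all values of the `(p-1)`-st finite
difference of `f` lie in `pℤ`. -/
theorem stmt4 (p : ℕ) (hp : p.Prime) (hodd : Odd p)
    (f : ℤ → ℤ) (hper : ∀ x : ℤ, f (x + p) = f x)
    (hcirc : Circular (fun i : Fin p => f ((i : ℕ) : ℤ))) :
    ∀ x : ℤ, (p : ℤ) ∣ (diffOp^[p - 1] f) x := by
  intro x
  have hperiod : ∑ k ∈ range p, f k = 0 := by
    simpa [Fin.sum_univ_eq_sum_range (fun k : ℕ => f k)] using hcirc.sum_eq_zero hodd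
  have hmod := fwdDiff_iter_pred_modEq_sum hp 1 f x
  rw [show Δ_[1] = diffOp from rfl] at hmod
  simp only [nsmul_one, Function.Periodic.sum_range_add_eq hper, hperiod] at hmod
  exact Int.modEq_zero_iff_dvd.1 hmod
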